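/- arXiv:funct-an/9710002 — 2 statements merged into one kernel-verified Lean document; each statement's English description precedes it below -/
import Mathlib

section
/- For all S, T ∈ U₁(H), the composition T ∘ S belongs to U₁(H), and for every z ∈ B_H one has φ_{T∘S}(z) = φ_T(φ_S(z)); that is, T ↦ φ_T is an action of U₁(H) on B_H by generalized linear fractional transformations. -/
/-- The extended Hilbert space `H̃ = H ⊕ ℂ` (Hilbert space direct sum). -/
noncomputable abbrev ExtH (H : Type*) [NormedAddCommGroup H] [InnerProductSpace ℂ H] :=
  WithLp 2 (H × ℂ)

/-- The element `(z, a)` of `H̃`. -/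
noncomputable def mk2 {H : Type*} [NormedAddCommGroup H] [InnerProductSpace ℂ H]
    (z : H) (a : ℂ) : ExtH H :=
  (WithLp.equiv 2 (H × ℂ)).symm (z, a)

/-- The generalized linear fractional (Möbius) transformation with block data `(A,x,y,a)`:
`φ(z) = (Az + x)/(⟨y,z⟩ + a)`. -/
noncomputable def moebius {H : Type*} [NormedAddCommGroup H] [InnerProductSpace ℂ H]
    (A : H →L[ℂ] H) (x y : H) (a : ℂ) (z : H) : H :=
  ((inner ℂ y z : ℂ) + a)⁻¹ • (A z + x)

/-!
Composition stays in `U₁(H)` because `(T S)* ε (T S) = S* (T* ε T) S = S* ε S = ε`.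
For the action, `φ_T(z)` is the dehomogenization `v / d` of `T(z, 1) = (v, d)`, and it only
depends on the line through `T(z, 1)`. If `S(z, 1) = (u, c)`, then `φ_S(z) = c⁻¹ u`, and
`(T S)(z, 1) = T(u, c) = c · T(c⁻¹ u, 1)`, so `φ_{T S}(z) = φ_T(φ_S(z))`. The division by `c` is
legitimate because `S` preserves the indefinite form `|λ|² - ‖z‖²`, so
`|c|² = ‖u‖² + 1 - ‖z‖² > 0` on the ball.
-/

open ContinuousLinearMap

section Adjoint

variable {𝕜 E : Type*} [RCLike 𝕜] [NormedAddCommGroup E] [InnerProductSpace 𝕜 E]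
  [CompleteSpace E] {ε S T : E →L[𝕜] E}

theorem adjoint_comp_conj_comp_eq (hS : adjoint S ∘L ε ∘L S = ε)
    (hT : adjoint T ∘L ε ∘L T = ε) : adjoint (T ∘L S) ∘L ε ∘L (T ∘L S) = ε := by
  calc adjoint (T ∘L S) ∘L ε ∘L (T ∘L S) = adjoint S ∘L (adjoint T ∘L ε ∘L T) ∘L S := by
        simp only [adjoint_comp, comp_assoc]
    _ = ε := by rw [hT, hS]

theorem inner_apply_apply_eq_of_adjoint_comp_conj_eq (hS : adjoint S ∘L ε ∘L S = ε) (w : E) :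
    inner 𝕜 (ε (S w)) (S w) = inner 𝕜 (ε w) w := by
  rw [← adjoint_inner_left, ← comp_apply, ← comp_apply, comp_assoc, hS]

end Adjoint

section Block

variable {H : Type*} [NormedAddCommGroup H] [InnerProductSpace ℂ H]

theorem mk2_inj {z w : H} {a b : ℂ} : mk2 z a = mk2 w b ↔ z = w ∧ a = b :=
  (WithLp.equiv 2 (H × ℂ)).symm.injective.eq_iff.trans Prod.mk_inj

theorem inner_mk2 (z w : H) (a b : ℂ) :
    inner ℂ (mk2 z a) (mk2 w b) = inner ℂ z w + starRingEnd ℂ a * b := by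
  rw [WithLp.prod_inner_apply]
  show inner ℂ z w + inner ℂ a b = _
  simp [mul_comm]

theorem apply_mk2_one {T : ExtH H →L[ℂ] ExtH H} {A : H →L[ℂ] H} {x y : H} {a : ℂ}
    (hblock : ∀ (z : H) (l : ℂ), T (mk2 z l) = mk2 (A z + l • x) (inner ℂ y z + l * a))
    (z : H) : T (mk2 z 1) = mk2 (A z + x) (inner ℂ y z + a) := by
  rw [hblock, one_smul, one_mul]

theorem moebius_inv_smul (A : H →L[ℂ] H) (x y : H) (a : ℂ) {c : ℂ} (hc : c ≠ 0) (u : H) :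
    moebius A x y a (c⁻¹ • u) = (inner ℂ y u + c * a)⁻¹ • (A u + c • x) := by
  have hnum : A (c⁻¹ • u) + x = c⁻¹ • (A u + c • x) := by
    rw [map_smul, smul_add, smul_smul, inv_mul_cancel₀ hc, one_smul]
  have hden : inner ℂ y (c⁻¹ • u) + a = c⁻¹ * (inner ℂ y u + c * a) := by
    rw [inner_smul_right]
    field_simp
  rw [moebius, hnum, hden, smul_smul]
  congr 1
  field_simp

variable [CompleteSpace H] {ε S : ExtH H →L[ℂ] ExtH H}

theorem norm_sq_sub_norm_sq_eq (hε : ∀ (z : H) (l : ℂ), ε (mk2 z l) = mk2 (-z) l)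
    (hS : adjoint S ∘L ε ∘L S = ε) {z u : H} {c : ℂ} (hSz : S (mk2 z 1) = mk2 u c) :
    ‖c‖ ^ 2 - ‖u‖ ^ 2 = 1 - ‖z‖ ^ 2 := by
  have key := inner_apply_apply_eq_of_adjoint_comp_conj_eq hS (mk2 z 1)
  rw [hSz, hε, hε, inner_mk2, inner_mk2, inner_neg_left, inner_neg_left,
    inner_self_eq_norm_sq_to_K, inner_self_eq_norm_sq_to_K, RCLike.conj_mul, map_one,
    one_mul] at key
  simp only [Complex.coe_algebraMap] at key
  have key' : -‖u‖ ^ 2 + ‖c‖ ^ 2 = -‖z‖ ^ 2 + 1 := by exact_mod_cast key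
  linarith

theorem ne_zero_of_apply_mk2_one (hε : ∀ (z : H) (l : ℂ), ε (mk2 z l) = mk2 (-z) l)
    (hS : adjoint S ∘L ε ∘L S = ε) {z u : H} {c : ℂ} (hSz : S (mk2 z 1) = mk2 u c)
    (hz : ‖z‖ < 1) : c ≠ 0 := by
  have hform := norm_sq_sub_norm_sq_eq hε hS hSz
  have hpos : 0 < ‖c‖ ^ 2 := by nlinarith [norm_nonneg z, sq_nonneg ‖u‖]
  rintro rfl
  simp at hpos

end Block

open ContinuousLinearMap in
/-- for `S, T ∈ U₁(H)` the composition `T ∘ S` belongs to `U₁(H)` and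
`φ_{T∘S}(z) = φ_T(φ_S(z))` for every `z` in the Hilbert ball: `T ↦ φ_T` is an action of
`U₁(H)` on the Hilbert ball by generalized linear fractional transformations. -/
theorem moebius_action_comp
    {H : Type*} [NormedAddCommGroup H] [InnerProductSpace ℂ H] [CompleteSpace H]
    (ε : ExtH H →L[ℂ] ExtH H) (hε : ∀ (z : H) (l : ℂ), ε (mk2 z l) = mk2 (-z) l)
    (S T : ExtH H →L[ℂ] ExtH H)
    (hS : adjoint S ∘L ε ∘L S = ε) (hT : adjoint T ∘L ε ∘L T = ε)
    (As : H →L[ℂ] H) (xs ys : H) (as : ℂ)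
    (hSblock : ∀ (z : H) (l : ℂ),
      S (mk2 z l) = mk2 (As z + l • xs) ((inner ℂ ys z : ℂ) + l * as))
    (At : H →L[ℂ] H) (xt yt : H) (at' : ℂ)
    (hTblock : ∀ (z : H) (l : ℂ),
      T (mk2 z l) = mk2 (At z + l • xt) ((inner ℂ yt z : ℂ) + l * at')) :
    (adjoint (T ∘L S) ∘L ε ∘L (T ∘L S) = ε) ∧
    (∀ (Ac : H →L[ℂ] H) (xc yc : H) (ac : ℂ),
      (∀ (z : H) (l : ℂ),
        (T ∘L S) (mk2 z l) = mk2 (Ac z + l • xc) ((inner ℂ yc z : ℂ) + l * ac)) →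
      ∀ z : H, ‖z‖ < 1 →
        moebius Ac xc yc ac z = moebius At xt yt at' (moebius As xs ys as z)) := by
  refine ⟨adjoint_comp_conj_comp_eq hS hT, fun Ac xc yc ac hCblock z hz => ?_⟩
  have hSz := apply_mk2_one hSblock z
  have hc := ne_zero_of_apply_mk2_one hε hS hSz hz
  obtain ⟨hnum, hden⟩ := mk2_inj.1 <| calc
    mk2 (Ac z + xc) (inner ℂ yc z + ac) = T (S (mk2 z 1)) := (apply_mk2_one hCblock z).symm
    _ = _ := by rw [hSz, hTblock]
  have hφS : moebius As xs ys as z = (inner ℂ ys z + as)⁻¹ • (As z + xs) := rfl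
  rw [hφS, moebius_inv_smul At xt yt at' hc, moebius, hnum, hden]
end

section
/- For all bounded operators C, C' on H̃ and every z ∈ B_H, let w = P(C'ẑ) + ⟨(0,1), C'ẑ⟩·z ∈ H, where P : H̃ → H is the projection onto the first summand (w is the holomorphic gradient of f_{C'} at z). Then f_C(z)·f_{C'}(z) − ( k_z·⟨ẑ, C(w,0)⟩ + k_z²·⟨ẑ, C ẑ⟩·⟨z, w⟩ ) = f_{C ∘ ε ∘ C'}(z). In other words, the ∗-product f_C ∗ f_{C'} = f_C·f_{C'} − ∂f_C(grad f_{C'}) equals f_{C ∗ε C'}. -/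
/-- Projection of `H̃ = H ⊕ ℂ` onto the first summand. -/
noncomputable def fst2 {H : Type*} [NormedAddCommGroup H] [InnerProductSpace ℂ H]
    (p : ExtH H) : H :=
  ((WithLp.equiv 2 (H × ℂ)) p).1

/-- The Kähler function `f_C(z) = ⟨ẑ, C ẑ⟩/(1 − ‖z‖²)` on the Hilbert ball, where
`ẑ = (z,1) ∈ H̃`. -/
noncomputable def kahlerFun {H : Type*} [NormedAddCommGroup H] [InnerProductSpace ℂ H]
    (C : ExtH H →L[ℂ] ExtH H) (z : H) : ℂ :=
  ((1 - ‖z‖ ^ 2 : ℝ) : ℂ)⁻¹ * (inner ℂ (mk2 z 1) (C (mk2 z 1)) : ℂ)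

/-!
Write `C'ẑ = (u, l)`, so that `w = u + l z`. Since `ε(u, l) = (-u, l) = l ẑ - (w, 0)`, one has
`f_{C∘ε∘C'}(z) = l f_C(z) - k_z ⟨ẑ, C(w,0)⟩`. On the other hand `k_z ‖z‖² + 1 = k_z` gives
`f_{C'}(z) = k_z ⟨z, w⟩ + l`, and substituting this into `f_C f_{C'}` leaves exactly the
previous expression.
-/

section ExtH

variable {H : Type*} [NormedAddCommGroup H] [InnerProductSpace ℂ H]

lemma inner_mk2_mk2 (a : H) (b : ℂ) (c : H) (d : ℂ) :
    (inner ℂ (mk2 a b) (mk2 c d) : ℂ) = inner ℂ a c + starRingEnd ℂ b * d := by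
  simp [mk2, WithLp.prod_inner_apply, RCLike.inner_apply, mul_comm]

lemma mk2_fst2_inner (p : ExtH H) : mk2 (fst2 p) (inner ℂ (mk2 (0 : H) 1) p) = p := by
  simp only [mk2, fst2, WithLp.equiv_apply, WithLp.equiv_symm_apply, WithLp.prod_inner_apply,
    inner_zero_left, RCLike.inner_apply, map_one, mul_one, zero_add]

lemma mk2_neg_eq_smul_sub (z u : H) (l : ℂ) :
    mk2 (-u) l = l • mk2 z 1 - mk2 (u + l • z) 0 := by
  apply (WithLp.equiv 2 (H × ℂ)).injective
  simp [mk2]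

lemma inv_mul_inner_mk2_one {z : H} (hz : ‖z‖ ≠ 1) (u : H) (l : ℂ) :
    ((1 - ‖z‖ ^ 2 : ℝ) : ℂ)⁻¹ * inner ℂ (mk2 z 1) (mk2 u l)
      = ((1 - ‖z‖ ^ 2 : ℝ) : ℂ)⁻¹ * inner ℂ z (u + l • z) + l := by
  have hk : ((1 - ‖z‖ ^ 2 : ℝ) : ℂ) ≠ 0 := by
    rw [Complex.ofReal_ne_zero, sub_ne_zero, ne_comm, Ne,
      pow_eq_one_iff_of_nonneg (norm_nonneg z) two_ne_zero]
    exact hz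
  rw [inner_mk2_mk2, map_one, inner_add_right, inner_smul_right, inner_self_eq_norm_sq_to_K,
    RCLike.ofReal_eq_complex_ofReal]
  push_cast at hk ⊢
  field_simp
  ring

open ContinuousLinearMap in
lemma kahlerFun_comp_eps_comp (C C' ε : ExtH H →L[ℂ] ExtH H)
    (hε : ∀ (z : H) (l : ℂ), ε (mk2 z l) = mk2 (-z) l) (z : H) :
    kahlerFun (C ∘L ε ∘L C') z
      = inner ℂ (mk2 (0 : H) 1) (C' (mk2 z 1)) * kahlerFun C z
        - ((1 - ‖z‖ ^ 2 : ℝ) : ℂ)⁻¹ * inner ℂ (mk2 z 1)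
            (C (mk2 (fst2 (C' (mk2 z 1)) + inner ℂ (mk2 (0 : H) 1) (C' (mk2 z 1)) • z) 0)) := by
  rw [kahlerFun, kahlerFun, comp_apply, comp_apply, ← mk2_fst2_inner (C' (mk2 z 1)), hε,
    mk2_neg_eq_smul_sub z, map_sub, map_smul, inner_sub_right, inner_smul_right,
    mk2_fst2_inner]
  ring

end ExtH

open ContinuousLinearMap in
theorem kahlerFun_star_product_general
    {H : Type*} [NormedAddCommGroup H] [InnerProductSpace ℂ H]
    (ε : ExtH H →L[ℂ] ExtH H) (hε : ∀ (z : H) (l : ℂ), ε (mk2 z l) = mk2 (-z) l)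
    (C C' : ExtH H →L[ℂ] ExtH H) (z : H) (hz : ‖z‖ < 1)
    (w : H)
    (hw : w = fst2 (C' (mk2 z 1)) + (inner ℂ (mk2 (0 : H) 1) (C' (mk2 z 1)) : ℂ) • z) :
    kahlerFun C z * kahlerFun C' z -
        (((1 - ‖z‖ ^ 2 : ℝ) : ℂ)⁻¹ * (inner ℂ (mk2 z 1) (C (mk2 w 0)) : ℂ)
          + (((1 - ‖z‖ ^ 2 : ℝ) : ℂ)⁻¹) ^ 2 * (inner ℂ (mk2 z 1) (C (mk2 z 1)) : ℂ)
              * (inner ℂ z w : ℂ))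
      = kahlerFun (C ∘L ε ∘L C') z := by
  have hC' : kahlerFun C' z
      = ((1 - ‖z‖ ^ 2 : ℝ) : ℂ)⁻¹ * inner ℂ z w + inner ℂ (mk2 (0 : H) 1) (C' (mk2 z 1)) := by
    rw [kahlerFun, ← mk2_fst2_inner (C' (mk2 z 1)), inv_mul_inner_mk2_one hz.ne,
      mk2_fst2_inner, hw]
  rw [kahlerFun_comp_eps_comp C C' ε hε, ← hw, hC', kahlerFun]
  ring

open ContinuousLinearMap in
/-- with `w = P(C'ẑ) + ⟨(0,1), C'ẑ⟩•z` (the holomorphic gradient of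
`f_{C'}` at `z`), one has
`f_C(z)·f_{C'}(z) − (k_z⟨ẑ, C(w,0)⟩ + k_z²⟨ẑ, Cẑ⟩⟨z,w⟩) = f_{C∘ε∘C'}(z)`;
i.e. the ∗-product `f_C ∗ f_{C'}` equals `f_{C ∗ε C'}`. -/
theorem kahlerFun_star_product
    {H : Type*} [NormedAddCommGroup H] [InnerProductSpace ℂ H] [CompleteSpace H]
    (ε : ExtH H →L[ℂ] ExtH H) (hε : ∀ (z : H) (l : ℂ), ε (mk2 z l) = mk2 (-z) l)
    (C C' : ExtH H →L[ℂ] ExtH H) (z : H) (hz : ‖z‖ < 1)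
    (w : H)
    (hw : w = fst2 (C' (mk2 z 1)) + (inner ℂ (mk2 (0 : H) 1) (C' (mk2 z 1)) : ℂ) • z) :
    kahlerFun C z * kahlerFun C' z -
        (((1 - ‖z‖ ^ 2 : ℝ) : ℂ)⁻¹ * (inner ℂ (mk2 z 1) (C (mk2 w 0)) : ℂ)
          + (((1 - ‖z‖ ^ 2 : ℝ) : ℂ)⁻¹) ^ 2 * (inner ℂ (mk2 z 1) (C (mk2 z 1)) : ℂ)
              * (inner ℂ z w : ℂ))
      = kahlerFun (C ∘L ε ∘L C') z :=
  kahlerFun_star_product_general ε hε C C' z hz w hw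
end
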